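/- arXiv:2502.17578 — 2 statements merged into one kernel-verified Lean document; each statement's English description precedes it below -/
import Mathlib

section
/- Let 0 < β ≤ 1 and let pass_D@k := 1 − (1/β)·∫₀^β (1−p)^k dp be the aggregate success rate when per-attempt success probabilities are uniform on [0, β]. Then −log(pass_D@k) is asymptotically equivalent to 1/(β·k) as k → ∞; that is, β·k·(−log(pass_D@k)) → 1 as k → ∞. In particular the negative log aggregate success rate follows a power law in k with exponent 1. -/
/-! The mean failure probability after `k` attempts is
`m k = (1 - (1 - β) ^ (k + 1)) / (β (k + 1))`, so `m k → 0` while `β k · m k → 1`.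
Since `-log (1 - x) ~ x` as `x → 0`, also `β k · (-log (1 - m k)) → 1`. -/

open MeasureTheory Real Filter Asymptotics Topology

theorem integral_one_sub_pow (β : ℝ) (k : ℕ) :
    ∫ p in (0 : ℝ)..β, (1 - p) ^ k = (1 - (1 - β) ^ (k + 1)) / (k + 1) := by
  rw [intervalIntegral.integral_comp_sub_left (fun x => x ^ k), integral_pow]
  norm_num

theorem isEquivalent_neg_log_one_sub {α : Type*} {l : Filter α} {a : α → ℝ}
    (ha : Tendsto a l (𝓝 0)) : (fun x => -log (1 - a x)) ~[l] a := by
  have hderiv : HasDerivAt (fun y : ℝ => -log (1 - y)) 1 0 := by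
    simpa using (((hasDerivAt_id' (0 : ℝ)).const_sub 1).log (by norm_num)).fun_neg
  have hlittle := (hasDerivAt_iff_isLittleO_nhds_zero.mp hderiv).comp_tendsto ha
  simp only [Function.comp_def, zero_add, sub_zero, log_one, neg_zero, smul_eq_mul,
    mul_one] at hlittle
  exact hlittle

theorem tendsto_one_sub_pow_succ {q : ℝ} (hq : |q| < 1) :
    Tendsto (fun k : ℕ => 1 - q ^ (k + 1)) atTop (𝓝 1) := by
  simpa using tendsto_const_nhds.sub
    ((tendsto_pow_atTop_nhds_zero_of_abs_lt_one hq).comp (tendsto_add_atTop_nat 1))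

theorem tendsto_one_sub_pow_succ_div_succ {q : ℝ} (hq : |q| < 1) :
    Tendsto (fun k : ℕ => (1 - q ^ (k + 1)) / (k + 1)) atTop (𝓝 0) := by
  have h := (tendsto_one_sub_pow_succ hq).mul tendsto_one_div_add_atTop_nhds_zero_nat
  rw [mul_zero] at h
  exact h.congr fun k => mul_one_div _ _

theorem tendsto_natCast_mul_one_sub_pow_succ_div_succ {q : ℝ} (hq : |q| < 1) :
    Tendsto (fun k : ℕ => (k : ℝ) * ((1 - q ^ (k + 1)) / (k + 1))) atTop (𝓝 1) := by
  have h := (tendsto_natCast_div_add_atTop (1 : ℝ)).mul (tendsto_one_sub_pow_succ hq)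
  rw [mul_one] at h
  exact h.congr fun k => by ring

/-- **Uniform distribution on `[0, β]`: power law with exponent 1.** If
per-attempt success probabilities are uniform on `[0, β]` with `0 < β ≤ 1`,
then `-log(pass_D@k) ~ 1/(β·k)` as `k → ∞`, i.e.
`β·k·(-log(pass_D@k)) → 1`. -/
theorem neg_log_pass_uniform_zero_left_endpoint
    (β : ℝ) (hβ0 : 0 < β) (hβ1 : β ≤ 1) :
    Tendsto
      (fun k : ℕ =>
        β * (k : ℝ) *
          (-Real.log (1 - (1 / β) * ∫ p in (0:ℝ)..β, (1 - p) ^ k)))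
      atTop (nhds 1) := by
  have hq : |1 - β| < 1 := abs_sub_lt_iff.mpr ⟨by linarith, by linarith⟩
  have hmean := (tendsto_one_sub_pow_succ_div_succ hq).const_mul (1 / β)
  rw [mul_zero] at hmean
  have hscaled : Tendsto (fun k : ℕ => β * k * (1 / β * ((1 - (1 - β) ^ (k + 1)) / (k + 1))))
      atTop (𝓝 1) :=
    (tendsto_natCast_mul_one_sub_pow_succ_div_succ hq).congr fun k => by field_simp
  simp_rw [integral_one_sub_pow]
  exact (IsEquivalent.refl.mul (isEquivalent_neg_log_one_sub hmean)).symm.tendsto_nhds hscaled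
end

section
/- Let α > 0 and β > 0, and let p follow the Kumaraswamy(α, β) distribution with density f(x) = α·β·x^(α−1)·(1−x^α)^(β−1) on (0,1). Let pass_{Kumaraswamy(α,β)}@k := 1 − ∫₀¹ (1−x)^k f(x) dx. Then ∫₀¹ (1−x)^k f(x) dx = α·β·Γ(α)·k^(−α) + O(k^(−α−ε)) for some ε > 0, and consequently −log(pass_{Kumaraswamy(α,β)}@k) = α·β·Γ(α)·k^(−α) + o(k^(−α)) as k → ∞; in particular the negative log aggregate success rate follows a power law in k with exponent α. -/
/-!
Write the density as `α β x^(α-1) φ(x)` with `φ(x) = (1 - x^α)^(β-1)`. The moment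
`∫₀¹ (1-x)^k x^(α-1) dx` is compared with the Gamma integral
`∫₀^∞ x^(α-1) e^(-kx) dx = Γ(α) k^(-α)` through `0 ≤ e^(-kx) - (1-x)^k ≤ k x² e^(-kx)`,
at a cost `O(k^(-α-1))`. The remaining part `∫₀¹ (1-x)^k x^(α-1) (φ(x) - 1) dx` is `O(k^(-2α))`:
although `φ` blows up at `1` when `β < 1`, one has `(1-x) |φ(x) - 1| ≤ K x^α`, and one factor
`1 - x` of `(1-x)^k` can be spent on it. This gives the expansion with `ε = min α 1`. Finally
`-log(1 - I) = I + O(I²)`, and `I² k^α → 0` because `I k^α` stays bounded while `I → 0`.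
-/

open MeasureTheory Real Filter Set Topology

lemma integral_rpow_mul_exp_neg_mul_Ioi_eq {s r : ℝ} (hs : 0 < s) (hr : 0 < r) :
    ∫ x in Ioi (0:ℝ), x ^ (s - 1) * exp (-(r * x)) = Gamma s * r ^ (-s) := by
  rw [integral_rpow_mul_exp_neg_mul_Ioi hs hr, one_div, inv_rpow hr.le, rpow_neg hr.le, mul_comm]

lemma integrableOn_rpow_mul_exp_neg_mul {s r : ℝ} (hs : 0 < s) (hr : 0 < r) :
    IntegrableOn (fun x ↦ x ^ (s - 1) * exp (-(r * x))) (Ioi 0) :=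
  .of_integral_ne_zero (by rw [integral_rpow_mul_exp_neg_mul_Ioi_eq hs hr]; positivity)

lemma abs_intervalIntegral_le_of_abs_le_rpow_mul_exp {f : ℝ → ℝ} {s r C : ℝ} (hs : 0 < s)
    (hr : 0 < r) (hC : 0 ≤ C)
    (hf : ∀ x ∈ Ioc (0:ℝ) 1, |f x| ≤ C * (x ^ (s - 1) * exp (-(r * x)))) :
    |∫ x in (0:ℝ)..1, f x| ≤ C * (Gamma s * r ^ (-s)) := by
  have hg : IntegrableOn (fun x ↦ C * (x ^ (s - 1) * exp (-(r * x)))) (Ioi 0) :=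
    (integrableOn_rpow_mul_exp_neg_mul hs hr).const_mul C
  calc |∫ x in (0:ℝ)..1, f x| ≤ ∫ x in (0:ℝ)..1, C * (x ^ (s - 1) * exp (-(r * x))) :=
        intervalIntegral.norm_integral_le_of_norm_le (f := f) zero_le_one (ae_of_all _ hf)
          ((intervalIntegrable_iff_integrableOn_Ioc_of_le zero_le_one).2
            (hg.mono_set Ioc_subset_Ioi_self))
    _ ≤ ∫ x in Ioi 0, C * (x ^ (s - 1) * exp (-(r * x))) := by
        rw [intervalIntegral.integral_of_le zero_le_one]
        refine setIntegral_mono_set hg ?_ Ioc_subset_Ioi_self.eventuallyLE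
        filter_upwards [ae_restrict_mem measurableSet_Ioi] with x hx
        have : 0 < x := hx
        positivity
    _ = C * (Gamma s * r ^ (-s)) := by
        rw [integral_const_mul, integral_rpow_mul_exp_neg_mul_Ioi_eq hs hr]

lemma one_sub_pow_le_exp_neg_mul (k : ℕ) {x : ℝ} (hx : x ≤ 1) :
    (1 - x) ^ k ≤ exp (-(k * x)) := by
  rw [← mul_neg, exp_nat_mul]
  exact pow_le_pow_left₀ (by linarith) (one_sub_le_exp_neg x) k

lemma exp_neg_mul_sub_one_sub_pow_le (k : ℕ) {x : ℝ} (hx₀ : 0 ≤ x) (hx₁ : x ≤ 1) :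
    exp (-(k * x)) - (1 - x) ^ k ≤ k * x ^ 2 * exp (-(k * x)) := by
  have h : 1 - x ^ 2 ≤ (1 - x) * exp x := by
    nlinarith [add_one_le_exp x]
  have hB : 1 - k * x ^ 2 ≤ (1 - x) ^ k * exp (k * x) := calc
    1 - k * x ^ 2 ≤ (1 - x ^ 2) ^ k := by
      simpa [sub_eq_add_neg] using one_add_mul_le_pow (a := -x ^ 2) (by nlinarith) k
    _ ≤ ((1 - x) * exp x) ^ k := pow_le_pow_left₀ (by nlinarith) h k
    _ = (1 - x) ^ k * exp (k * x) := by rw [mul_pow, ← exp_nat_mul]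
  have he : exp (k * x) * exp (-(k * x)) = 1 := by rw [← exp_add]; simp
  have hmul := mul_le_mul_of_nonneg_right hB (exp_pos (-(k * x))).le
  rw [mul_assoc, he] at hmul
  linarith

lemma abs_indicator_one_sub_pow_sub_exp_neg_mul_le {k : ℕ} (hk : 1 ≤ k) {x : ℝ} (hx : 0 < x) :
    |(Ioc 0 1).indicator (fun x ↦ (1 - x) ^ k) x - exp (-(k * x))|
      ≤ k * x ^ 2 * exp (-(k * x)) := by
  by_cases hx₁ : x ≤ 1
  · rw [indicator_of_mem (mem_Ioc.2 ⟨hx, hx₁⟩), abs_sub_comm,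
      abs_of_nonneg (sub_nonneg.2 (one_sub_pow_le_exp_neg_mul k hx₁))]
    exact exp_neg_mul_sub_one_sub_pow_le k hx.le hx₁
  · rw [indicator_of_notMem (fun h ↦ hx₁ h.2), zero_sub, abs_neg, abs_of_pos (exp_pos _)]
    have : (1:ℝ) ≤ k * x ^ 2 := one_le_mul_of_one_le_of_one_le (by exact_mod_cast hk)
      (one_le_pow₀ (by linarith))
    nlinarith [exp_pos (-(k * x))]

lemma intervalIntegrable_one_sub_pow_mul_rpow (k : ℕ) {s : ℝ} (hs : 0 < s) :
    IntervalIntegrable (fun x ↦ (1 - x) ^ k * x ^ (s - 1)) volume 0 1 :=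
  (intervalIntegral.intervalIntegrable_rpow' (by linarith)).continuousOn_mul (by fun_prop)

lemma abs_integral_one_sub_pow_mul_rpow_sub_Gamma_le {s : ℝ} (hs : 0 < s) {k : ℕ} (hk : 1 ≤ k) :
    |(∫ x in (0:ℝ)..1, (1 - x) ^ k * x ^ (s - 1)) - Gamma s * k ^ (-s)|
      ≤ Gamma (s + 2) * k ^ (-(s + 1)) := by
  have hk₀ : (0:ℝ) < k := by exact_mod_cast hk
  set e : ℝ → ℝ := fun x ↦ exp (-(k * x))
  set f : ℝ → ℝ := (Ioc 0 1).indicator fun x ↦ (1 - x) ^ k * x ^ (s - 1)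
  have hf : IntegrableOn f (Ioi 0) :=
    (((intervalIntegrable_one_sub_pow_mul_rpow k hs).1).integrable_indicator
      measurableSet_Ioc).integrableOn
  have hint : ∫ x in (0:ℝ)..1, (1 - x) ^ k * x ^ (s - 1) = ∫ x in Ioi 0, f x := by
    rw [intervalIntegral.integral_of_le zero_le_one, setIntegral_indicator measurableSet_Ioc,
      inter_eq_right.2 Ioc_subset_Ioi_self]
  have hbound : ∀ x ∈ Ioi (0:ℝ), ‖f x - x ^ (s - 1) * e x‖
      ≤ k * (x ^ (s + 2 - 1) * e x) := by
    intro x hx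
    have hx : 0 < x := hx
    rw [show f x = _ from indicator_mul_left _ _ _, mul_comm (x ^ (s - 1)), ← sub_mul, norm_mul,
      norm_of_nonneg (rpow_nonneg hx.le _)]
    calc _ ≤ k * x ^ 2 * e x * x ^ (s - 1) := by
          gcongr; exact abs_indicator_one_sub_pow_sub_exp_neg_mul_le hk hx
      _ = _ := by
          rw [show s + 2 - 1 = (s - 1) + 2 by ring, rpow_add hx, rpow_two]; ring
  calc _ = ‖∫ x in Ioi 0, (f x - x ^ (s - 1) * e x)‖ := by
        rw [integral_sub hf (integrableOn_rpow_mul_exp_neg_mul hs hk₀),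
          integral_rpow_mul_exp_neg_mul_Ioi_eq hs hk₀, hint, norm_eq_abs]
    _ ≤ ∫ x in Ioi 0, k * (x ^ (s + 2 - 1) * e x) :=
        norm_integral_le_of_norm_le
          ((integrableOn_rpow_mul_exp_neg_mul (by linarith) hk₀).const_mul _)
          ((ae_restrict_iff' measurableSet_Ioi).2 (ae_of_all _ hbound))
    _ = Gamma (s + 2) * k ^ (-(s + 1)) := by
        rw [integral_const_mul, integral_rpow_mul_exp_neg_mul_Ioi_eq (by linarith) hk₀,
          show -(s + 1) = -(s + 2) + 1 by ring, rpow_add_one hk₀.ne']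
        ring

lemma one_sub_max_mul_le_one_sub_rpow {y : ℝ} (d : ℝ) (hy₀ : 0 ≤ y) (hy₁ : y ≤ 1) :
    1 - max d 1 * y ≤ (1 - y) ^ d := by
  rcases le_total d 1 with hd₁ | hd₁
  · rw [max_eq_right hd₁, one_mul]
    exact self_le_rpow_of_le_one (by linarith) (by linarith) hd₁
  · rw [max_eq_left hd₁, sub_eq_add_neg, sub_eq_add_neg, ← mul_neg]
    exact one_add_mul_self_le_rpow_one_add (by linarith) hd₁

lemma min_mul_one_sub_le_one_sub_rpow {α x : ℝ} (hα : 0 < α) (hx₀ : 0 ≤ x) (hx₁ : x ≤ 1) :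
    min α 1 * (1 - x) ≤ 1 - x ^ α := by
  rcases le_total α 1 with h | h
  · rw [min_eq_left h]
    have hconc := rpow_one_add_le_one_add_mul_self (s := x - 1) (by linarith) hα.le h
    rw [add_sub_cancel] at hconc
    linarith
  · rw [min_eq_right h, one_mul]
    have hle := rpow_le_rpow_of_exponent_ge' hx₀ hx₁ zero_le_one h
    rw [rpow_one] at hle
    linarith

lemma exists_one_sub_mul_abs_one_sub_rpow_rpow_sub_one_le {α β : ℝ} (hα : 0 < α) (hβ : 0 < β) :
    ∃ K ≥ 0, ∀ x ∈ Icc (0:ℝ) 1, (1 - x) * |(1 - x ^ α) ^ (β - 1) - 1| ≤ K * x ^ α := by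
  rcases le_total 0 (β - 1) with hc | hc
  · refine ⟨max (β - 1) 1, by positivity, fun x ⟨hx₀, hx₁⟩ ↦ ?_⟩
    have hy₀ : 0 ≤ x ^ α := rpow_nonneg hx₀ α
    have hy₁ : x ^ α ≤ 1 := rpow_le_one hx₀ hx₁ hα.le
    have h₀ : 0 ≤ 1 - (1 - x ^ α) ^ (β - 1) :=
      sub_nonneg.2 (rpow_le_one (by linarith) (by linarith) hc)
    rw [abs_sub_comm, abs_of_nonneg h₀]
    calc (1 - x) * (1 - (1 - x ^ α) ^ (β - 1)) ≤ 1 * (1 - (1 - x ^ α) ^ (β - 1)) := by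
          gcongr; linarith
      _ ≤ max (β - 1) 1 * x ^ α := by
        linarith [one_sub_max_mul_le_one_sub_rpow (β - 1) hy₀ hy₁]
  set m := min α 1
  have hm : 0 < m := lt_min hα one_pos
  refine ⟨m ^ (β - 1), rpow_nonneg hm.le _, fun x ⟨hx₀, hx₁⟩ ↦ ?_⟩
  rcases hx₁.eq_or_lt with rfl | hx₁
  · simp [rpow_nonneg hm.le]
  have hy₀ : 0 ≤ x ^ α := rpow_nonneg hx₀ α
  have hy₁ : x ^ α < 1 := rpow_lt_one hx₀ hx₁ hα
  have hmy : m * (1 - x) ≤ 1 - x ^ α := min_mul_one_sub_le_one_sub_rpow hα hx₀ hx₁.le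
  have hpos : 0 < m * (1 - x) := mul_pos hm (by linarith)
  have h₁ : |(1 - x ^ α) ^ (β - 1) - 1| ≤ (1 - x ^ α) ^ (β - 1) * x ^ α := by
    have hge : 1 ≤ (1 - x ^ α) ^ (β - 1) :=
      one_le_rpow_of_pos_of_le_one_of_nonpos (by linarith) (by linarith) hc
    have hle : 1 - x ^ α ≤ (1 - x ^ α) ^ (1 - β) :=
      self_le_rpow_of_le_one (by linarith) (by linarith) (by linarith)
    have hinv : (1 - x ^ α) ^ (β - 1) * (1 - x ^ α) ^ (1 - β) = 1 := by
      rw [← rpow_add (by linarith)]; simp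
    rw [abs_of_nonneg (by linarith)]
    nlinarith
  have h₂ : (1 - x) * (1 - x ^ α) ^ (β - 1) ≤ m ^ (β - 1) := calc
    (1 - x) * (1 - x ^ α) ^ (β - 1) ≤ (1 - x) * (m * (1 - x)) ^ (β - 1) :=
      mul_le_mul_of_nonneg_left (rpow_le_rpow_of_nonpos hpos hmy hc) (by linarith)
    _ = m ^ (β - 1) * (1 - x) ^ (β - 1 + 1) := by
      rw [mul_rpow hm.le (by linarith), rpow_add_one (by linarith)]; ring
    _ ≤ m ^ (β - 1) := by
      apply mul_le_of_le_one_right (rpow_nonneg hm.le _)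
      exact rpow_le_one (by linarith) (by linarith) (by linarith)
  calc (1 - x) * |(1 - x ^ α) ^ (β - 1) - 1|
      ≤ (1 - x) * ((1 - x ^ α) ^ (β - 1) * x ^ α) := by gcongr
    _ ≤ m ^ (β - 1) * x ^ α := by rw [← mul_assoc]; gcongr

lemma exists_abs_one_sub_pow_mul_rpow_mul_sub_one_le {α β : ℝ} (hα : 0 < α) (hβ : 0 < β) :
    ∃ K ≥ 0, ∀ k : ℕ, 1 ≤ k → ∀ x ∈ Ioc (0:ℝ) 1,
      |(1 - x) ^ k * (x ^ (α - 1) * ((1 - x ^ α) ^ (β - 1) - 1))|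
        ≤ K * (x ^ (2 * α - 1) * exp (-(k * x))) := by
  obtain ⟨K, hK, hbound⟩ := exists_one_sub_mul_abs_one_sub_rpow_rpow_sub_one_le hα hβ
  refine ⟨K * exp 1, by positivity, fun k hk x ⟨hx₀, hx₁⟩ ↦ ?_⟩
  obtain ⟨j, rfl⟩ := Nat.exists_eq_add_of_le' hk
  have hexp : (1 - x) ^ j ≤ exp 1 * exp (-((j + 1 : ℕ) * x)) := by
    rw [← exp_add]
    refine (one_sub_pow_le_exp_neg_mul j hx₁).trans (exp_le_exp.2 ?_)
    push_cast
    nlinarith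
  have hxx : x ^ (α - 1) * x ^ α = x ^ (2 * α - 1) := by
    rw [← rpow_add hx₀]; ring_nf
  calc |(1 - x) ^ (j + 1) * (x ^ (α - 1) * ((1 - x ^ α) ^ (β - 1) - 1))|
      = (1 - x) ^ j * x ^ (α - 1) * ((1 - x) * |(1 - x ^ α) ^ (β - 1) - 1|) := by
        rw [abs_mul, abs_mul, abs_of_nonneg (pow_nonneg (by linarith) _),
          abs_of_nonneg (rpow_nonneg hx₀.le _), pow_succ]
        ring
    _ ≤ exp 1 * exp (-((j + 1 : ℕ) * x)) * x ^ (α - 1) * (K * x ^ α) :=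
        mul_le_mul (mul_le_mul_of_nonneg_right hexp (rpow_nonneg hx₀.le _))
          (hbound x ⟨hx₀.le, hx₁⟩) (mul_nonneg (by linarith) (abs_nonneg _)) (by positivity)
    _ = K * exp 1 * (x ^ (2 * α - 1) * exp (-((j + 1 : ℕ) * x))) := by
        rw [← hxx]; ring

lemma exists_abs_kumaraswamy_integral_sub_le {α β : ℝ} (hα : 0 < α) (hβ : 0 < β) :
    ∃ M > 0, ∀ k : ℕ, 1 ≤ k →
      |(∫ x in (0:ℝ)..1, (1 - x) ^ k * (α * β * x ^ (α - 1) * (1 - x ^ α) ^ (β - 1)))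
          - α * β * Gamma α * (k : ℝ) ^ (-α)|
        ≤ M * (k : ℝ) ^ (-(α + min α 1)) := by
  obtain ⟨K, hK, hbound⟩ := exists_abs_one_sub_pow_mul_rpow_mul_sub_one_le hα hβ
  refine ⟨α * β * (Gamma (α + 2) + K * Gamma (2 * α)), by positivity, fun k hk ↦ ?_⟩
  have hk₀ : (0:ℝ) < k := by exact_mod_cast hk
  have hk₁ : (1:ℝ) ≤ k := by exact_mod_cast hk
  set P : ℝ → ℝ := fun x ↦ (1 - x) ^ k * (x ^ (α - 1) * ((1 - x ^ α) ^ (β - 1) - 1))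
  have hP : IntervalIntegrable P volume 0 1 := by
    refine IntervalIntegrable.mono_fun' (g := fun x ↦ K * (x ^ (2 * α - 1) * exp (-(k * x))))
      (((intervalIntegral.intervalIntegrable_rpow' (by linarith)).mul_continuousOn
        (by fun_prop)).const_mul K) (by fun_prop) ?_
    rw [uIoc_of_le zero_le_one]
    exact (ae_restrict_iff' measurableSet_Ioc).2 (ae_of_all _ (hbound k hk))
  have hsplit : (∫ x in (0:ℝ)..1, (1 - x) ^ k * (α * β * x ^ (α - 1) * (1 - x ^ α) ^ (β - 1)))
      = α * β * ((∫ x in (0:ℝ)..1, (1 - x) ^ k * x ^ (α - 1)) + ∫ x in (0:ℝ)..1, P x) := by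
    rw [← intervalIntegral.integral_add (intervalIntegrable_one_sub_pow_mul_rpow k hα) hP,
      ← intervalIntegral.integral_const_mul]
    congr 1; ext x; ring
  have hmain := abs_integral_one_sub_pow_mul_rpow_sub_Gamma_le hα hk
  have hpert := abs_intervalIntegral_le_of_abs_le_rpow_mul_exp (by linarith) hk₀ hK (hbound k hk)
  have h₁ : (k : ℝ) ^ (-(α + 1)) ≤ k ^ (-(α + min α 1)) :=
    rpow_le_rpow_of_exponent_le hk₁ (by linarith [min_le_right α 1])
  have h₂ : (k : ℝ) ^ (-(2 * α)) ≤ k ^ (-(α + min α 1)) :=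
    rpow_le_rpow_of_exponent_le hk₁ (by linarith [min_le_left α 1])
  rw [hsplit, mul_assoc (α * β), ← mul_sub, add_sub_right_comm, abs_mul,
    abs_of_pos (by positivity : 0 < α * β), mul_assoc (α * β) (Gamma (α + 2) + _)]
  refine mul_le_mul_of_nonneg_left ?_ (by positivity)
  calc _ ≤ Gamma (α + 2) * (k : ℝ) ^ (-(α + 1)) + K * (Gamma (2 * α) * k ^ (-(2 * α))) :=
        (abs_add_le _ _).trans (add_le_add hmain hpert)
    _ ≤ (Gamma (α + 2) + K * Gamma (2 * α)) * k ^ (-(α + min α 1)) := by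
        rw [add_mul, mul_assoc]
        gcongr

lemma abs_log_one_sub_add_le {x : ℝ} (hx : |x| ≤ 1 / 2) : |log (1 - x) + x| ≤ 2 * x ^ 2 := by
  have h := abs_log_sub_add_sum_range_le (by linarith : |x| < 1) 1
  simp only [Finset.range_one, Finset.sum_singleton, zero_add, pow_one, Nat.cast_zero,
    div_one, one_add_one_eq_two] at h
  rw [add_comm, ← sq_abs]
  refine h.trans ?_
  rw [div_le_iff₀ (by linarith)]
  nlinarith [mul_nonneg (sq_nonneg |x|) (by linarith : 0 ≤ 1 - 2 * |x|)]

lemma tendsto_neg_log_one_sub_sub_self_mul {ι : Type*} {l : Filter ι} {J w : ι → ℝ} {c : ℝ}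
    (hJ : Tendsto J l (𝓝 0)) (hJw : Tendsto (fun i ↦ J i * w i) l (𝓝 c)) :
    Tendsto (fun i ↦ (-log (1 - J i) - J i) * w i) l (𝓝 0) := by
  have hbound : Tendsto (fun i ↦ 2 * |J i| * |J i * w i|) l (𝓝 0) := by
    simpa using ((hJ.abs.const_mul 2).mul hJw.abs)
  refine squeeze_zero_norm' ?_ hbound
  filter_upwards [hJ.abs (Iic_mem_nhds (by norm_num : |(0:ℝ)| < 1 / 2))] with i hi
  have hlog := abs_log_one_sub_add_le hi
  rw [norm_mul, norm_eq_abs, show -log (1 - J i) - J i = -(log (1 - J i) + J i) by ring, abs_neg]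
  calc |log (1 - J i) + J i| * |w i| ≤ 2 * J i ^ 2 * |w i| := by gcongr
    _ = 2 * |J i| * |J i * w i| := by rw [abs_mul, ← sq_abs]; ring

lemma tendsto_neg_log_one_sub_sub_mul_rpow {J : ℕ → ℝ} {c α ε M : ℝ} (hα : 0 < α) (hε : 0 < ε)
    (hJ : ∀ᶠ k : ℕ in atTop, |J k - c * (k : ℝ) ^ (-α)| ≤ M * (k : ℝ) ^ (-(α + ε))) :
    Tendsto (fun k : ℕ ↦ (-log (1 - J k) - c * (k : ℝ) ^ (-α)) * (k : ℝ) ^ α)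
      atTop (𝓝 0) := by
  have hpos : ∀ᶠ k : ℕ in atTop, (0 : ℝ) < k :=
    tendsto_natCast_atTop_atTop.eventually_gt_atTop 0
  have hrem : Tendsto (fun k : ℕ ↦ (J k - c * (k : ℝ) ^ (-α)) * (k : ℝ) ^ α) atTop (𝓝 0) := by
    refine squeeze_zero_norm' ?_ (by simpa using
      ((tendsto_rpow_neg_atTop hε).comp tendsto_natCast_atTop_atTop).const_mul M)
    filter_upwards [hJ, hpos] with k hk hk₀
    rw [norm_mul, norm_eq_abs, norm_of_nonneg (rpow_nonneg hk₀.le _)]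
    calc _ ≤ M * (k : ℝ) ^ (-(α + ε)) * (k : ℝ) ^ α := by gcongr
      _ = M * (k : ℝ) ^ (-ε) := by rw [mul_assoc, ← rpow_add hk₀]; ring_nf
  have hJw : Tendsto (fun k : ℕ ↦ J k * (k : ℝ) ^ α) atTop (𝓝 c) := by
    have := hrem.add_const c
    rw [zero_add] at this
    refine this.congr' ?_
    filter_upwards [hpos] with k hk₀
    rw [sub_mul, mul_assoc, ← rpow_add hk₀, neg_add_cancel, rpow_zero]; ring
  have hJ0 : Tendsto J atTop (𝓝 0) := by
    have := hJw.mul ((tendsto_rpow_neg_atTop hα).comp tendsto_natCast_atTop_atTop)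
    rw [mul_zero] at this
    refine this.congr' ?_
    filter_upwards [hpos] with k hk₀
    rw [Function.comp_apply, mul_assoc, ← rpow_add hk₀, add_neg_cancel, rpow_zero, mul_one]
  have := (tendsto_neg_log_one_sub_sub_self_mul hJ0 hJw).add hrem
  rw [add_zero] at this
  exact this.congr fun k ↦ by ring

/-- **Kumaraswamy distribution: power law with exponent `α`.** If per-attempt
success probabilities follow `Kumaraswamy(α, β)` with density
`α·β·x^(α-1)·(1-x^α)^(β-1)` on `(0,1)`, then
`I_k = ∫₀¹ (1-x)^k f(x) dx = α·β·Γ(α)·k^(-α) + O(k^(-α-ε))` for some `ε > 0`,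
and `-log(pass_{Kumaraswamy(α,β)}@k) = α·β·Γ(α)·k^(-α) + o(k^(-α))`. -/
theorem neg_log_pass_kumaraswamy_power_law
    (α β : ℝ) (hα : 0 < α) (hβ : 0 < β) :
    (∃ ε > (0:ℝ), ∃ M > (0:ℝ), ∃ k₀ : ℕ, ∀ k : ℕ, k₀ ≤ k →
      |(∫ x in (0:ℝ)..1, (1 - x) ^ k *
            (α * β * x ^ (α - 1) * (1 - x ^ α) ^ (β - 1)))
          - α * β * Real.Gamma α * (k : ℝ) ^ (-α)|
        ≤ M * (k : ℝ) ^ (-(α + ε))) ∧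
    Tendsto
      (fun k : ℕ =>
        ((-Real.log (1 - ∫ x in (0:ℝ)..1, (1 - x) ^ k *
              (α * β * x ^ (α - 1) * (1 - x ^ α) ^ (β - 1))))
            - α * β * Real.Gamma α * (k : ℝ) ^ (-α)) * (k : ℝ) ^ α)
      atTop (nhds 0) := by
  obtain ⟨M, hM, hbound⟩ := exists_abs_kumaraswamy_integral_sub_le hα hβ
  have hε : 0 < min α 1 := lt_min hα one_pos
  exact ⟨⟨min α 1, hε, M, hM, 1, hbound⟩,
    tendsto_neg_log_one_sub_sub_mul_rpow hα hε (eventually_atTop.2 ⟨1, hbound⟩)⟩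
end
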